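/- Fix d ≥ 1. There is a constant C = C(d) such that for every h > 0 and every t > 0, the d-dimensional discrete heat kernel satisfies ‖Φ^h(t)‖_{L^∞_h} = sup_{j∈ℤ^d} |Φ^h_j(t)| ≤ C t^{−d/2}. -/

import Mathlib

noncomputable section

/-- The `k`-th term of the series defining the one-dimensional discrete heat kernel. -/
def wterm (h : ℝ) (j : ℤ) (t : ℝ) (k : ℕ) : ℝ :=
  if j ≤ (k : ℤ) then
    (t / h ^ 2) ^ (2 * (k : ℤ) - j).toNat /
      ((((k : ℤ) - j).toNat.factorial : ℝ) * (k.factorial : ℝ))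
  else 0

/-- The one-dimensional discrete heat kernel. -/
def wker (h : ℝ) (j : ℤ) (t : ℝ) : ℝ :=
  (1 / h) * Real.exp (-2 * t / h ^ 2) * ∑' k : ℕ, wterm h j t k

/-- The `d`-dimensional discrete heat kernel `Φ^h_j(t) = ∏_{i=1}^d w^h_{j_i}(t)`. -/
def Phiker (h : ℝ) {d : ℕ} (j : Fin d → ℤ) (t : ℝ) : ℝ :=
  ∏ i : Fin d, wker h (j i) t

/-- Unit lattice vector in direction `i`. -/
def gunit {d : ℕ} (i : Fin d) : Fin d → ℤ := fun k => if k = i then 1 else 0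

/-- Forward difference operator `D_{+i}`. -/
def fdiff {d : ℕ} {E : Type*} [NormedAddCommGroup E] [NormedSpace ℝ E]
    (h : ℝ) (i : Fin d) (u : (Fin d → ℤ) → E) : (Fin d → ℤ) → E :=
  fun j => (h⁻¹ : ℝ) • (u (j + gunit i) - u j)

/-- Backward difference operator `D_{−i}`. -/
def bdiff {d : ℕ} {E : Type*} [NormedAddCommGroup E] [NormedSpace ℝ E]
    (h : ℝ) (i : Fin d) (u : (Fin d → ℤ) → E) : (Fin d → ℤ) → E :=
  fun j => (h⁻¹ : ℝ) • (u j - u (j - gunit i))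

/-!
Put `x = t / h²` and `u n = x ^ n / n!`. Then `w^h_j(t) = h⁻¹ e^{-2x} ∑_k u (k - j) u k`, and
`2ab ≤ a² + b²` bounds the series by `∑ (u n)²`: the modified Bessel function `I_j(2x)` is at
most `I_0(2x)`. Since `(u n)² = (2x)^{2n} / (2n)! · C(2n, n) / 4ⁿ` and
`C(2n, n) / 4ⁿ ≤ 1 / √(2n+1)`, an AM-GM step gives
`2 √(2x) (u n)² ≤ (2x)^{2n} / (2n)! + (2x)^{2n+1} / (2n+1)!`, and summing over `n` yields
`2 √(2x) ∑ (u n)² ≤ e^{2x}`. Hence `0 ≤ w^h_j(t) ≤ (2 √(2t))⁻¹ ≤ t^{-1/2}` uniformly in `h`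
and `j`, and the product over the `d` coordinates gives the claim with `C = 1`.
-/

open Real Nat Finset

theorem centralBinom_sq_mul_le (m : ℕ) : (m.centralBinom : ℝ) ^ 2 * (2 * m + 1) ≤ 16 ^ m := by
  induction m with
  | zero => simp
  | succ m ih =>
    have hrec : ((m : ℝ) + 1) * (m + 1).centralBinom = 2 * (2 * m + 1) * m.centralBinom := by
      exact_mod_cast succ_mul_centralBinom_succ m
    have key : ((m : ℝ) + 1) ^ 2 * ((m + 1).centralBinom ^ 2 * (2 * (m + 1 : ℕ) + 1))
        ≤ ((m : ℝ) + 1) ^ 2 * 16 ^ (m + 1) :=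
      calc _ = (4 : ℝ) * (2 * m + 1) * (2 * m + 3) * (m.centralBinom ^ 2 * (2 * m + 1)) := by
            push_cast
            linear_combination (2 * (m : ℝ) + 3) *
              ((m + 1) * (m + 1).centralBinom + 2 * (2 * m + 1) * m.centralBinom) * hrec
        _ ≤ 4 * (2 * m + 1) * (2 * m + 3) * 16 ^ m := by gcongr
        _ ≤ 16 * ((m : ℝ) + 1) ^ 2 * 16 ^ m :=
            mul_le_mul_of_nonneg_right (by nlinarith) (by positivity)
        _ = _ := by ring
    exact le_of_mul_le_mul_left key (by positivity)

theorem sq_pow_div_factorial_eq (x : ℝ) (m : ℕ) :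
    (x ^ m / m !) ^ 2 = (2 * x) ^ (2 * m) / (2 * m)! * (m.centralBinom / 4 ^ m) := by
  have hfact : ((2 * m)! : ℝ) = m.centralBinom * m ! * m ! := by
    rw [centralBinom, two_mul]
    exact_mod_cast (add_choose_mul_factorial_mul_factorial m m).symm
  have hc : (m.centralBinom : ℝ) ≠ 0 := mod_cast (centralBinom_pos m).ne'
  rw [hfact, mul_pow, pow_mul, show (2 : ℝ) ^ 2 = 4 by norm_num]
  field_simp
  ring

theorem two_mul_sqrt_mul_sq_pow_div_factorial_le {x : ℝ} (hx : 0 ≤ x) (m : ℕ) :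
    2 * √(2 * x) * (x ^ m / m !) ^ 2 ≤
      (2 * x) ^ (2 * m) / (2 * m)! + (2 * x) ^ (2 * m + 1) / (2 * m + 1)! := by
  set y := 2 * x
  set c : ℝ := m.centralBinom / 4 ^ m
  have hy : √y ^ 2 = y := sq_sqrt (by positivity)
  have hc : c ^ 2 * (2 * m + 1) ≤ 1 := by
    rw [div_pow, ← pow_mul, show (4 : ℝ) ^ (m * 2) = 16 ^ m by rw [pow_mul']; norm_num,
      div_mul_eq_mul_div, div_le_one (by positivity)]
    exact centralBinom_sq_mul_le m
  have hamgm : 2 * √y * c ≤ 1 + y / (2 * m + 1) := by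
    have hsq : c ^ 2 * (2 * m + 1) + y / (2 * m + 1) - 2 * √y * c
        = (c * (2 * m + 1) - √y) ^ 2 / (2 * m + 1) := by
      field_simp
      linear_combination -hy
    have : 0 ≤ (c * (2 * m + 1) - √y) ^ 2 / (2 * m + 1) := by positivity
    linarith
  have hodd : y ^ (2 * m + 1) / (2 * m + 1)! = y ^ (2 * m) / (2 * m)! * (y / (2 * m + 1)) := by
    rw [factorial_succ, pow_succ]
    push_cast
    field_simp
  rw [sq_pow_div_factorial_eq, hodd]
  calc 2 * √y * (y ^ (2 * m) / (2 * m)! * c) = y ^ (2 * m) / (2 * m)! * (2 * √y * c) := by ring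
    _ ≤ y ^ (2 * m) / (2 * m)! * (1 + y / (2 * m + 1)) := by gcongr
    _ = _ := by ring

theorem summable_sq_pow_div_factorial (x : ℝ) : Summable fun m : ℕ => (x ^ m / m !) ^ 2 := by
  refine .of_nonneg_of_le (fun _ => sq_nonneg _) (fun m => ?_) (summable_pow_div_factorial (x ^ 2))
  have hm : (1 : ℝ) ≤ m ! := mod_cast m.factorial_pos
  rw [div_pow, ← pow_mul, pow_mul']
  gcongr
  nlinarith

theorem two_mul_sqrt_mul_tsum_sq_pow_div_factorial_le {x : ℝ} (hx : 0 ≤ x) :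
    2 * √(2 * x) * ∑' m : ℕ, (x ^ m / m !) ^ 2 ≤ exp (2 * x) := by
  set a : ℕ → ℝ := fun n => (2 * x) ^ n / (n ! : ℝ)
  have ha : HasSum a (exp (2 * x)) := by
    rw [exp_eq_exp_ℝ]
    exact NormedSpace.expSeries_div_hasSum_exp _
  have heven := (ha.summable.comp_injective (mul_right_injective₀ two_ne_zero)).hasSum
  have hodd := (ha.summable.comp_injective
    ((add_left_injective 1).comp (mul_right_injective₀ two_ne_zero))).hasSum
  have hpairs : HasSum (fun m => a (2 * m) + a (2 * m + 1)) (exp (2 * x)) := by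
    rw [ha.unique (heven.even_add_odd hodd)]
    exact heven.add hodd
  rw [← tsum_mul_left]
  exact hasSum_le (two_mul_sqrt_mul_sq_pow_div_factorial_le hx)
    ((summable_sq_pow_div_factorial x).mul_left _).hasSum hpairs

theorem tsum_mul_shift_le_of_hasSum_sq {v : ℤ → ℝ} {S : ℝ} (hv : HasSum (fun n => v n ^ 2) S)
    (j : ℤ) : ∑' k : ℕ, v (k - j) * v k ≤ S := by
  have hinj : Function.Injective fun k : ℕ => (k : ℤ) - j := fun a b hab => by
    simpa using hab
  have hshift : Summable fun k : ℕ => v (k - j) ^ 2 := hv.summable.comp_injective hinj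
  have hnat : Summable fun k : ℕ => v k ^ 2 := hv.summable.comp_injective Nat.cast_injective
  have hbound (k : ℕ) : |v (k - j) * v k| ≤ (v (k - j) ^ 2 + v k ^ 2) / 2 := by
    rw [abs_mul, ← sq_abs (v (k - j)), ← sq_abs (v k)]
    nlinarith [sq_nonneg (|v (k - j)| - |v k|)]
  have hsum := (hshift.add hnat).div_const 2
  calc ∑' k : ℕ, v (k - j) * v k ≤ ∑' k : ℕ, (v (k - j) ^ 2 + v k ^ 2) / 2 :=
        Summable.tsum_le_tsum (fun k => (le_abs_self _).trans (hbound k))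
          (.of_norm_bounded hsum hbound) hsum
    _ = ((∑' k : ℕ, v (k - j) ^ 2) + ∑' k : ℕ, v k ^ 2) / 2 := by
        rw [tsum_div_const, hshift.tsum_add hnat]
    _ ≤ (S + S) / 2 := by
        gcongr
        · exact hv.tsum_eq ▸ tsum_comp_le_tsum_of_inj hv.summable (fun _ => sq_nonneg _) hinj
        · exact hv.tsum_eq ▸
            tsum_comp_le_tsum_of_inj hv.summable (fun _ => sq_nonneg _) Nat.cast_injective
    _ = S := by ring

def expTerm (x : ℝ) (n : ℤ) : ℝ := if 0 ≤ n then x ^ n.toNat / n.toNat ! else 0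

theorem expTerm_natCast (x : ℝ) (m : ℕ) : expTerm x m = x ^ m / m ! := by
  simp [expTerm]

theorem expTerm_nonneg {x : ℝ} (hx : 0 ≤ x) (n : ℤ) : 0 ≤ expTerm x n := by
  unfold expTerm
  split_ifs <;> positivity

theorem hasSum_expTerm_sq (x : ℝ) :
    HasSum (fun n : ℤ => expTerm x n ^ 2) (∑' m : ℕ, (x ^ m / m !) ^ 2) := by
  rw [← Nat.cast_injective.hasSum_iff]
  · simpa [Function.comp_def, expTerm_natCast] using (summable_sq_pow_div_factorial x).hasSum
  · intro n hn
    have hneg : ¬ 0 ≤ n := fun h => hn ⟨n.toNat, by omega⟩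
    simp [expTerm, hneg]

theorem wterm_eq_expTerm_mul (h t : ℝ) (j : ℤ) (k : ℕ) :
    wterm h j t k = expTerm (t / h ^ 2) (k - j) * expTerm (t / h ^ 2) k := by
  unfold wterm
  split_ifs with hjk
  · rw [expTerm_natCast, expTerm, if_pos (by omega),
      show (2 * (k : ℤ) - j).toNat = ((k : ℤ) - j).toNat + k by omega, pow_add, mul_div_mul_comm]
  · rw [expTerm, if_neg (by omega), zero_mul]

theorem wker_nonneg (j : ℤ) {h t : ℝ} (hh : 0 ≤ h) (ht : 0 ≤ t) : 0 ≤ wker h j t := by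
  have hx : 0 ≤ t / h ^ 2 := by positivity
  have : 0 ≤ ∑' k, wterm h j t k := tsum_nonneg fun k => by
    rw [wterm_eq_expTerm_mul]
    exact mul_nonneg (expTerm_nonneg hx _) (expTerm_nonneg hx _)
  unfold wker
  positivity

theorem wker_le (j : ℤ) {h t : ℝ} (hh : 0 < h) (ht : 0 < t) :
    wker h j t ≤ t ^ (-(1 / 2 : ℝ)) := by
  set x := t / h ^ 2
  have hx : 0 < x := by positivity
  have hseries : ∑' k, wterm h j t k ≤ exp (2 * x) / (2 * √(2 * x)) := by
    rw [le_div_iff₀' (by positivity)]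
    refine le_trans (mul_le_mul_of_nonneg_left ?_ (by positivity))
      (two_mul_sqrt_mul_tsum_sq_pow_div_factorial_le hx.le)
    simp_rw [wterm_eq_expTerm_mul]
    exact tsum_mul_shift_le_of_hasSum_sq (hasSum_expTerm_sq x) j
  have hsqrt : h * √(2 * x) = √(2 * t) := by
    rw [← sqrt_sq hh.le, ← sqrt_mul (sq_nonneg h)]
    congr 1
    simp only [x]
    field_simp
  have hexp : exp (-2 * t / h ^ 2) * exp (2 * x) = 1 := by
    rw [← exp_add, ← exp_zero]
    simp only [x]
    ring_nf
  calc wker h j t ≤ 1 / h * exp (-2 * t / h ^ 2) * (exp (2 * x) / (2 * √(2 * x))) := by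
        unfold wker
        gcongr
    _ = (exp (-2 * t / h ^ 2) * exp (2 * x)) / (2 * (h * √(2 * x))) := by ring
    _ = (2 * √(2 * t))⁻¹ := by rw [hexp, hsqrt, one_div]
    _ ≤ (√t)⁻¹ := by
        gcongr
        nlinarith [sqrt_le_sqrt (show t ≤ 2 * t by linarith), sqrt_nonneg t]
    _ = t ^ (-(1 / 2 : ℝ)) := by rw [sqrt_eq_rpow, rpow_neg ht.le]

theorem discrete_heat_kernel_Linfty_bound_general (d : ℕ) :
    ∃ C : ℝ, 0 < C ∧
      ∀ h : ℝ, 0 < h → ∀ t : ℝ, 0 < t → ∀ j : Fin d → ℤ,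
        |Phiker h j t| ≤ C * t ^ (-((d : ℝ) / 2)) := by
  refine ⟨1, one_pos, fun h hh t ht j => ?_⟩
  have hw (i : Fin d) : 0 ≤ wker h (j i) t := wker_nonneg (j i) hh.le ht.le
  calc |Phiker h j t| = ∏ i, wker h (j i) t := abs_of_nonneg (prod_nonneg fun i _ => hw i)
    _ ≤ ∏ _i : Fin d, t ^ (-(1 / 2 : ℝ)) :=
        prod_le_prod (fun i _ => hw i) fun i _ => wker_le (j i) hh ht
    _ = 1 * t ^ (-((d : ℝ) / 2)) := by
        rw [prod_const, Finset.card_univ, Fintype.card_fin, ← rpow_natCast, ← rpow_mul ht.le]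
        ring_nf

/-- `‖Φ^h(t)‖_{L^∞_h} ≤ C t^{−d/2}` with `C = C(d)` independent of
the mesh size. -/
theorem discrete_heat_kernel_Linfty_bound (d : ℕ) (hd : 1 ≤ d) :
    ∃ C : ℝ, 0 < C ∧
      ∀ h : ℝ, 0 < h → ∀ t : ℝ, 0 < t → ∀ j : Fin d → ℤ,
        |Phiker h j t| ≤ C * t ^ (-((d : ℝ) / 2)) :=
  discrete_heat_kernel_Linfty_bound_general d
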